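/- arXiv:0810.0396 — 2 statements merged into one kernel-verified Lean document; each statement's English description precedes it below -/
import Mathlib

section
/- Let ρ = e^{iπ/3} and let r ≥ 1 be an integer. Then Σ_{n=1}^{∞} (ρ^n + ρ̄^n)/n^{r+1} = (1 − 2^{−r})(1 − 3^{−r}) · ζ(r+1); equivalently, ζ(r+1) = (L_{r+1}(ρ) + L_{r+1}(ρ̄)) / ((1 − 2^{−r})(1 − 3^{−r})), where L_{r+1}(z) = Σ_{n≥1} z^n/n^{r+1}. -/
/-- `ζ(s) = Σ_{n ≥ 1} 1/n^s`. -/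
noncomputable def zr (s : ℕ) : ℂ := ∑' n : ℕ, (((n : ℂ) + 1) ^ s)⁻¹

/-- The polylogarithm `L_s(z) = Σ_{n ≥ 1} z^n/n^s`. -/
noncomputable def Lr (s : ℕ) (z : ℂ) : ℂ := ∑' n : ℕ, z ^ (n + 1) / ((n : ℂ) + 1) ^ s

/-- `ρ = e^{iπ/3}`. -/
noncomputable def rho : ℂ := Complex.exp (Real.pi * Complex.I / 3)

/-!
`ρ = e^{iπ/3}` is a primitive sixth root of unity with `ρ + ρ̄ = 1`, so `ρⁿ + ρ̄ⁿ = 2 cos(nπ/3)`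
depends only on `n mod 6`, and equals `1 - 2·[2 ∣ n] - 3·[3 ∣ n] + 6·[6 ∣ n]`. Summing against
`n^{-s}`, the terms over multiples of `k` contribute `k^{-s} ζ(s)`, so the series is
`(1 - 2·2^{-s} - 3·3^{-s} + 6·6^{-s}) ζ(s) = (1 - 2^{1-s})(1 - 3^{1-s}) ζ(s)`.
-/

open Complex ComplexConjugate

lemma tsum_ite_dvd {α : Type*} [AddCommMonoid α] [TopologicalSpace α] {k : ℕ} (hk : k ≠ 0)
    (f : ℕ → α) : ∑' n, (if k ∣ n then f n else 0) = ∑' m, f (k * m) := by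
  refine ((mul_right_injective₀ hk).tsum_eq fun n hn => ?_).symm.trans
    (tsum_congr fun m => if_pos (dvd_mul_right k m))
  by_contra h
  exact hn (if_neg fun ⟨m, hm⟩ => h ⟨m, hm.symm⟩)

lemma tsum_ite_dvd_inv_pow {𝕜 : Type*} [Field 𝕜] [TopologicalSpace 𝕜] [IsTopologicalSemiring 𝕜]
    [T2Space 𝕜] {k : ℕ} (hk : k ≠ 0) (s : ℕ) :
    ∑' n : ℕ, (if k ∣ n then ((n : 𝕜) ^ s)⁻¹ else 0) =
      ((k : 𝕜) ^ s)⁻¹ * ∑' n : ℕ, ((n : 𝕜) ^ s)⁻¹ := by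
  simp only [tsum_ite_dvd hk, Nat.cast_mul, mul_pow, mul_inv, tsum_mul_left]

lemma tsum_shift_of_apply_zero {α : Type*} [AddCommMonoid α] [TopologicalSpace α] {f : ℕ → α}
    (h0 : f 0 = 0) : ∑' n, f (n + 1) = ∑' n, f n :=
  Nat.succ_injective.tsum_eq fun n hn =>
    ⟨n - 1, Nat.succ_pred_eq_of_ne_zero (by rintro rfl; exact hn h0)⟩

lemma one_sub_zpow_neg_ne_zero {𝕜 : Type*} [NormedDivisionRing 𝕜] {p : 𝕜} (hp : 1 < ‖p‖) {r : ℕ}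
    (hr : r ≠ 0) : 1 - p ^ (-(r : ℤ)) ≠ 0 := by
  refine sub_ne_zero.mpr fun h => (zpow_lt_one_of_neg₀ hp (by omega : -(r : ℤ) < 0)).ne ?_
  rw [← norm_zpow, ← h, norm_one]

lemma rho_eq_exp_ofReal_mul_I : rho = exp ((Real.pi / 3 : ℝ) * I) := by
  rw [rho]
  push_cast
  ring_nf

lemma norm_rho : ‖rho‖ = 1 := by
  rw [rho_eq_exp_ofReal_mul_I]
  exact norm_exp_ofReal_mul_I _

lemma conj_rho : conj rho = 1 - rho := by
  refine eq_sub_of_add_eq' ?_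
  rw [add_conj, rho_eq_exp_ofReal_mul_I, exp_ofReal_mul_I_re, Real.cos_pi_div_three]
  push_cast; ring

lemma rho_sq : rho ^ 2 = rho - 1 := by
  have h := mul_conj' rho
  rw [norm_rho, conj_rho] at h
  push_cast at h
  linear_combination -h

lemma rho_pow_add_conj_rho_pow (n : ℕ) :
    rho ^ n + conj rho ^ n =
      1 - (if 2 ∣ n then 2 else 0) - (if 3 ∣ n then 3 else 0) + (if 6 ∣ n then 6 else 0) := by
  rw [conj_rho]
  have h6 : rho ^ 6 = 1 := by grind [rho_sq]
  have h6' : (1 - rho) ^ 6 = 1 := by grind [rho_sq]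
  rw [pow_eq_pow_mod n h6, pow_eq_pow_mod n h6']
  have hmod : ∀ d, d ∣ 6 → (d ∣ n ↔ d ∣ n % 6) := fun d hd => (Nat.dvd_mod_iff hd).symm
  rw [if_congr (hmod 2 (by norm_num)) rfl rfl, if_congr (hmod 3 (by norm_num)) rfl rfl,
    if_congr (hmod 6 dvd_rfl) rfl rfl]
  have hlt : n % 6 < 6 := Nat.mod_lt n (by norm_num)
  interval_cases n % 6 <;> norm_num <;> grind [rho_sq]

lemma summable_inv_pow {s : ℕ} (hs : 2 ≤ s) : Summable fun n : ℕ => ((n : ℂ) ^ s)⁻¹ :=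
  .of_norm (by simpa using Real.summable_nat_pow_inv.mpr hs)

lemma zr_eq_tsum_inv_pow {s : ℕ} (hs : s ≠ 0) : zr s = ∑' n : ℕ, ((n : ℂ) ^ s)⁻¹ := by
  rw [← tsum_shift_of_apply_zero (by simp [hs]), zr]
  push_cast; rfl

lemma summable_pow_succ_div_pow {z : ℂ} (hz : ‖z‖ ≤ 1) {s : ℕ} (hs : 2 ≤ s) :
    Summable fun n : ℕ => z ^ (n + 1) / ((n : ℂ) + 1) ^ s := by
  refine .of_norm_bounded ((summable_nat_add_iff 1).mpr (summable_inv_pow hs)).norm fun n => ?_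
  rw [norm_div, div_eq_mul_inv, ← norm_inv, norm_pow, Nat.cast_succ]
  exact mul_le_of_le_one_left (norm_nonneg _) (pow_le_one₀ (norm_nonneg _) hz)

lemma hasSum_ite_dvd_inv_pow {s k : ℕ} (hs : 2 ≤ s) (hk : k ≠ 0) :
    HasSum (fun n : ℕ => if k ∣ n then ((n : ℂ) ^ s)⁻¹ else 0) (((k : ℂ) ^ s)⁻¹ * zr s) := by
  rw [zr_eq_tsum_inv_pow (by omega), ← tsum_ite_dvd_inv_pow hk]
  exact (((summable_inv_pow hs).indicator {n | k ∣ n}).congr fun n =>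
    Set.indicator_apply ..).hasSum

lemma tsum_rho_pow_add_conj_rho_pow_mul_inv_pow {s : ℕ} (hs : 2 ≤ s) :
    ∑' n : ℕ, (rho ^ n + conj rho ^ n) * ((n : ℂ) ^ s)⁻¹ =
      (1 - 2 * ((2 : ℂ) ^ s)⁻¹) * (1 - 3 * ((3 : ℂ) ^ s)⁻¹) * zr s := by
  have h := (((hasSum_ite_dvd_inv_pow hs one_ne_zero).sub
    ((hasSum_ite_dvd_inv_pow hs two_ne_zero).mul_left 2)).sub
    ((hasSum_ite_dvd_inv_pow hs three_ne_zero).mul_left 3)).add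
    ((hasSum_ite_dvd_inv_pow hs (by norm_num : 6 ≠ 0)).mul_left 6)
  refine (tsum_congr fun n => ?_).trans (h.tsum_eq.trans ?_)
  · rw [rho_pow_add_conj_rho_pow, if_pos (one_dvd n)]
    split_ifs <;> ring
  · have h6 : (6 : ℂ) ^ s = 2 ^ s * 3 ^ s := by rw [← mul_pow]; norm_num
    push_cast
    rw [h6]
    ring

/-- For `r ≥ 1`: `Σ_{n≥1} (ρⁿ + ρ̄ⁿ)/n^{r+1} = (1 - 2^{-r})(1 - 3^{-r}) ζ(r+1)`;
equivalently `ζ(r+1) = (L_{r+1}(ρ) + L_{r+1}(ρ̄)) / ((1 - 2^{-r})(1 - 3^{-r}))`. -/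
theorem statement17 (r : ℕ) (hr : 1 ≤ r) :
    (∑' n : ℕ, (rho ^ (n + 1) + (starRingEnd ℂ) rho ^ (n + 1)) / ((n : ℂ) + 1) ^ (r + 1))
        = (1 - (2 : ℂ) ^ (-(r : ℤ))) * (1 - (3 : ℂ) ^ (-(r : ℤ))) * zr (r + 1) ∧
    zr (r + 1) = (Lr (r + 1) rho + Lr (r + 1) ((starRingEnd ℂ) rho)) /
        ((1 - (2 : ℂ) ^ (-(r : ℤ))) * (1 - (3 : ℂ) ^ (-(r : ℤ)))) := by
  have hs : 2 ≤ r + 1 := by omega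
  have hfactor : ∀ p : ℂ, p ≠ 0 → p * (p ^ (r + 1))⁻¹ = p ^ (-(r : ℤ)) := fun p hp => by
    rw [zpow_neg, zpow_natCast, pow_succ', mul_inv, mul_inv_cancel_left₀ hp]
  have hsum : (∑' n : ℕ, (rho ^ (n + 1) + conj rho ^ (n + 1)) / ((n : ℂ) + 1) ^ (r + 1))
      = (1 - (2 : ℂ) ^ (-(r : ℤ))) * (1 - (3 : ℂ) ^ (-(r : ℤ))) * zr (r + 1) := by
    calc _ = ∑' n : ℕ, (rho ^ n + conj rho ^ n) * ((n : ℂ) ^ (r + 1))⁻¹ := by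
          conv_rhs => rw [← tsum_shift_of_apply_zero (by simp)]
          simp only [div_eq_mul_inv, Nat.cast_succ]
      _ = _ := by
          rw [tsum_rho_pow_add_conj_rho_pow_mul_inv_pow hs, hfactor 2 two_ne_zero,
            hfactor 3 three_ne_zero]
  have hL : Lr (r + 1) rho + Lr (r + 1) (conj rho)
      = ∑' n : ℕ, (rho ^ (n + 1) + conj rho ^ (n + 1)) / ((n : ℂ) + 1) ^ (r + 1) := by
    rw [Lr, Lr, ← Summable.tsum_add (summable_pow_succ_div_pow norm_rho.le hs)
      (summable_pow_succ_div_pow (by rw [RCLike.norm_conj, norm_rho]) hs)]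
    simp only [add_div]
  have hne : ∀ p : ℂ, 1 < ‖p‖ → 1 - p ^ (-(r : ℤ)) ≠ 0 := fun p hp =>
    one_sub_zpow_neg_ne_zero hp (by omega)
  refine ⟨hsum, ?_⟩
  rw [hL, hsum, mul_div_cancel_left₀ _ (mul_ne_zero (hne 2 (by norm_num)) (hne 3 (by norm_num)))]
end

section
/- Let Z be the ℚ-linear subspace of ℝ spanned by 1 together with all multiple zeta values ζ(r_1,…,r_k) (for all k ≥ 1 and positive integers r_1,…,r_k with r_k ≥ 2). Then Z is a subring of ℝ, and the ℚ-subalgebra of ℂ generated by Z and iπ equals Z + iπZ; moreover this sum is direct, i.e. Z ∩ iπZ = {0}. -/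
/-- The multiple zeta value `ζ(r₁,…,r_k) = Σ_{0<n₁<⋯<n_k} 1/(n₁^{r₁}⋯n_k^{r_k})`,
as a sum over strictly increasing `k`-tuples of positive integers. -/
noncomputable def mzv (r : List ℕ) : ℝ :=
  ∑' n : {f : Fin r.length → ℕ // StrictMono f ∧ ∀ i, 0 < f i},
    ∏ i, ((n.1 i : ℝ) ^ r.get i)⁻¹

/-- The set consisting of `1` together with all multiple zeta values
`ζ(r₁,…,r_k)` with `k ≥ 1`, each `r_i ≥ 1` and `r_k ≥ 2`. -/
def MZVSet : Set ℝ :=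
  {1} ∪ {x | ∃ r : List ℕ, r ≠ [] ∧ (∀ m ∈ r, 0 < m) ∧
    (∃ l, r.getLast? = some l ∧ 2 ≤ l) ∧ x = mzv r}

/-- `Z`: the `ℚ`-linear span in `ℝ` of `1` and all multiple zeta values. -/
noncomputable def Zspan : Submodule ℚ ℝ := Submodule.span ℚ MZVSet

/-!
All series are taken in `ℝ≥0∞`, where they can be rearranged freely. The tails
`mzvTail r n = Σ_{n < n₁ < ⋯ < n_k} ∏ n_i^{-r_i}` satisfy a recursion in the smallest index, and
multiplying two such recursions while splitting the double sum according to how the two smallest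
indices compare gives the stuffle product `ζ(r) ζ(s) = Σ_t ζ(t)`, where every stuffle `t` of two
admissible index lists is admissible. The tails of admissible lists are finite (they are
`O(1/n)`), so the identity descends to `ℝ` and `Z` is closed under multiplication.

Since `π² = 6 ζ(2) ∈ Z` and `(iπ)² = -π²`, the set `Z + iπZ` is already a subalgebra of `ℂ`, so it
is the algebra generated by `Z` and `iπ`; the sum is direct because `iπZ` is purely imaginary.
-/

open scoped ENNReal

lemma ENNReal.toReal_list_sum {l : List ℝ≥0∞} (h : l.sum ≠ ⊤) :
    l.sum.toReal = (l.map ENNReal.toReal).sum := by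
  induction l with
  | nil => simp
  | cons x l ih =>
    rw [List.sum_cons, ENNReal.add_ne_top] at h
    rw [List.sum_cons, ENNReal.toReal_add h.1 h.2, ih h.2, List.map_cons, List.sum_cons]

theorem Algebra.coe_adjoin_union_singleton_of_sq_mem {K L : Type*} [CommRing K] [CommRing L]
    [Algebra K L] (A : Subalgebra K L) {w : L} (hw : w ^ 2 ∈ A) :
    (Algebra.adjoin K ((A : Set L) ∪ {w}) : Set L) = {z | ∃ x ∈ A, ∃ y ∈ A, z = x + w * y} := by
  let S : Subalgebra K L :=
    { carrier := {z | ∃ x ∈ A, ∃ y ∈ A, z = x + w * y}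
      mul_mem' := by
        rintro _ _ ⟨x₁, hx₁, y₁, hy₁, rfl⟩ ⟨x₂, hx₂, y₂, hy₂, rfl⟩
        exact ⟨x₁ * x₂ + w ^ 2 * (y₁ * y₂), add_mem (mul_mem hx₁ hx₂) (mul_mem hw (mul_mem hy₁ hy₂)),
          x₁ * y₂ + y₁ * x₂, add_mem (mul_mem hx₁ hy₂) (mul_mem hy₁ hx₂), by ring⟩
      add_mem' := by
        rintro _ _ ⟨x₁, hx₁, y₁, hy₁, rfl⟩ ⟨x₂, hx₂, y₂, hy₂, rfl⟩
        exact ⟨x₁ + x₂, add_mem hx₁ hx₂, y₁ + y₂, add_mem hy₁ hy₂, by ring⟩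
      algebraMap_mem' := fun c => ⟨algebraMap K L c, A.algebraMap_mem c, 0, zero_mem A, by simp⟩ }
  refine Set.Subset.antisymm (Algebra.adjoin_le (S := S) ?_) ?_
  · rintro z (hz | rfl)
    · exact ⟨z, hz, 0, zero_mem A, by simp⟩
    · exact ⟨0, zero_mem A, 1, one_mem A, by simp⟩
  · rintro _ ⟨x, hx, y, hy, rfl⟩
    have sub := Algebra.subset_adjoin (R := K) (s := (A : Set L) ∪ {w})
    exact add_mem (sub (.inl hx)) (mul_mem (sub (.inr rfl)) (sub (.inl hy)))

noncomputable def tailSum (f : ℕ → ℝ≥0∞) (n : ℕ) : ℝ≥0∞ := ∑' m, if n < m then f m else 0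

lemma tailSum_add (f g : ℕ → ℝ≥0∞) (n : ℕ) :
    tailSum (fun m => f m + g m) n = tailSum f n + tailSum g n := by
  simp only [tailSum, ← ENNReal.tsum_add, ite_add_zero]

lemma tailSum_const_mul (c : ℝ≥0∞) (f : ℕ → ℝ≥0∞) (n : ℕ) :
    tailSum (fun m => c * f m) n = c * tailSum f n := by
  simp only [tailSum, ← ENNReal.tsum_mul_left, mul_ite, mul_zero]

lemma tailSum_list_sum {α : Type*} (l : List α) (f : α → ℕ → ℝ≥0∞) (n : ℕ) :
    (l.map fun t => tailSum (f t) n).sum = tailSum (fun m => (l.map fun t => f t m).sum) n := by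
  induction l with
  | nil => simp [tailSum]
  | cons t l ih => simp only [List.map_cons, List.sum_cons, ih, tailSum_add]

lemma tailSum_mono {f g : ℕ → ℝ≥0∞} {n : ℕ} (h : ∀ m, n < m → f m ≤ g m) :
    tailSum f n ≤ tailSum g n :=
  ENNReal.tsum_le_tsum fun m => by split_ifs with hm <;> simp [h m, hm]

lemma tailSum_mul_tailSum (f g : ℕ → ℝ≥0∞) (n : ℕ) :
    tailSum f n * tailSum g n =
      tailSum (fun m => f m * tailSum g m + g m * tailSum f m + f m * g m) n := by
  have below : tailSum (fun i => f i * tailSum g i) n =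
      ∑' i, ∑' j, if n < i ∧ i < j then f i * g j else 0 := by
    refine tsum_congr fun i => ?_
    by_cases hi : n < i
    · simp only [hi, true_and, if_true, tailSum, ← ENNReal.tsum_mul_left, mul_ite, mul_zero]
    · simp [hi]
  have above : tailSum (fun j => g j * tailSum f j) n =
      ∑' j, ∑' i, if n < j ∧ j < i then f i * g j else 0 := by
    refine tsum_congr fun j => ?_
    by_cases hj : n < j
    · simp only [hj, true_and, if_true, tailSum, mul_comm (g j), ← ENNReal.tsum_mul_right, ite_mul,
        zero_mul]
    · simp [hj]
  have diagonal : tailSum (fun i => f i * g i) n =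
      ∑' i, ∑' j, if n < i ∧ i = j then f i * g j else 0 := by
    refine tsum_congr fun i => ?_
    by_cases hi : n < i <;> simp [hi]
  calc tailSum f n * tailSum g n
      = ∑' i, ∑' j, (if n < i then f i else 0) * (if n < j then g j else 0) := by
        simp only [tailSum]
        rw [← ENNReal.tsum_mul_right]
        simp only [← ENNReal.tsum_mul_left]
    _ = ∑' i, ∑' j, ((if n < i ∧ i < j then f i * g j else 0) +
          (if n < j ∧ j < i then f i * g j else 0) + (if n < i ∧ i = j then f i * g j else 0)) := by
        refine tsum_congr fun i => tsum_congr fun j => ?_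
        split_ifs <;> (try simp only [add_zero, zero_add, mul_zero, zero_mul]) <;> omega
    _ = _ := by
        rw [tailSum_add, tailSum_add, below, above, diagonal,
          ENNReal.tsum_comm (f := fun j i => if n < j ∧ j < i then f i * g j else 0)]
        simp only [ENNReal.tsum_add]

lemma tailSum_inv_sq_le (n : ℕ) : tailSum (fun m => ((m : ℝ≥0∞) ^ 2)⁻¹) n ≤ 2 / (n + 1) := by
  refine ENNReal.tsum_le_of_sum_range_le fun N => ?_
  have pos : ∀ m ∈ Finset.Ioo n N, (0 : ℝ) < m := fun m hm =>
    Nat.cast_pos.2 (Nat.zero_lt_of_lt (Finset.mem_Ioo.1 hm).1)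
  calc ∑ m ∈ Finset.range N, (if n < m then ((m : ℝ≥0∞) ^ 2)⁻¹ else 0)
      = ∑ m ∈ Finset.Ioo n N, ((m : ℝ≥0∞) ^ 2)⁻¹ := by
        rw [← Finset.sum_filter]
        congr 1
        ext m
        simp only [Finset.mem_filter, Finset.mem_range, Finset.mem_Ioo]
        omega
    _ = ENNReal.ofReal (∑ m ∈ Finset.Ioo n N, ((m : ℝ) ^ 2)⁻¹) := by
        rw [ENNReal.ofReal_sum_of_nonneg fun m hm => (inv_pos.2 (pow_pos (pos m hm) 2)).le]
        refine Finset.sum_congr rfl fun m hm => ?_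
        rw [ENNReal.ofReal_inv_of_pos (pow_pos (pos m hm) 2), ENNReal.ofReal_pow (pos m hm).le,
          ENNReal.ofReal_natCast]
    _ ≤ ENNReal.ofReal (2 / (n + 1)) := ENNReal.ofReal_le_ofReal (sum_Ioo_inv_sq_le n N)
    _ = 2 / (n + 1) := by
        rw [ENNReal.ofReal_div_of_pos (by positivity), ENNReal.ofReal_add (by positivity) zero_le_one]
        simp

noncomputable def mzvTail : List ℕ → ℕ → ℝ≥0∞
  | [], _ => 1
  | a :: r, n => tailSum (fun m => ((m : ℝ≥0∞) ^ a)⁻¹ * mzvTail r m) n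

lemma mzvTail_eq_tsum (r : List ℕ) (n : ℕ) :
    mzvTail r n = ∑' f : Fin r.length → ℕ,
      if StrictMono f ∧ ∀ i, n < f i then ∏ i, ((f i : ℝ≥0∞) ^ r.get i)⁻¹ else 0 := by
  induction r generalizing n with
  | nil => simp [mzvTail, Subsingleton.strictMono]
  | cons a r ih =>
    refine Eq.trans ?_ ((Fin.consEquiv fun _ : Fin (r.length + 1) => ℕ).tsum_eq _)
    simp only [mzvTail, tailSum, ENNReal.tsum_prod', Fin.consEquiv, Equiv.coe_fn_mk]
    refine tsum_congr fun m => ?_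
    have cons_iff : ∀ g : Fin r.length → ℕ,
        (StrictMono (Fin.cons m g : Fin (r.length + 1) → ℕ) ∧ ∀ i, n < (Fin.cons m g : Fin _ → ℕ) i)
          ↔ n < m ∧ StrictMono g ∧ ∀ i, m < g i := by
      intro g
      simp only [Fin.strictMono_cons, Fin.forall_fin_succ, Fin.cons_zero, Fin.cons_succ]
      constructor
      · rintro ⟨⟨hm, hg⟩, hn, -⟩
        exact ⟨hn, hg, hm⟩
      · rintro ⟨hn, hg, hm⟩
        exact ⟨⟨hm, hg⟩, hn, fun i => hn.trans (hm i)⟩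
    by_cases hm : n < m <;>
      simp [hm, ih, cons_iff, Fin.prod_univ_succ, ← ENNReal.tsum_mul_left, mul_ite]

lemma mzv_eq_toReal_mzvTail (r : List ℕ) : mzv r = (mzvTail r 0).toReal := by
  have h := tsum_subtype {f : Fin r.length → ℕ | StrictMono f ∧ ∀ i, 0 < f i}
    fun f => ∏ i, ((f i : ℝ≥0∞) ^ r.get i)⁻¹
  simp only [Set.indicator_apply, Set.mem_ofPred_eq] at h
  rw [mzvTail_eq_tsum, ← h, ENNReal.tsum_toReal_eq]
  · simp only [mzv, ENNReal.toReal_prod, ENNReal.toReal_inv, ENNReal.toReal_pow,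
      ENNReal.toReal_natCast]
    rfl
  · intro f
    refine ENNReal.prod_ne_top fun i _ => ENNReal.inv_ne_top.2 ?_
    exact pow_ne_zero _ (Nat.cast_ne_zero.2 (f.2.2 i).ne')

def IsAdmissible (r : List ℕ) : Prop :=
  r ≠ [] ∧ (∀ m ∈ r, 0 < m) ∧ ∃ l, r.getLast? = some l ∧ 2 ≤ l

lemma isAdmissible_cons_iff {a : ℕ} {l : List ℕ} :
    IsAdmissible (a :: l) ↔ 0 < a ∧ (l = [] ∧ 2 ≤ a ∨ IsAdmissible l) := by
  cases l with
  | nil => simp [IsAdmissible]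
  | cons b l => simp [IsAdmissible, List.getLast?_cons_cons, and_assoc]

-- The decay in `n` lets the next outer sum converge even when its exponent is `1`.
lemma mzvTail_le {r : List ℕ} (hr : IsAdmissible r) (n : ℕ) :
    mzvTail r n ≤ 2 ^ r.length / (n + 1) := by
  induction r generalizing n with
  | nil => exact absurd rfl hr.1
  | cons a l ih =>
    obtain ⟨ha, hl⟩ := isAdmissible_cons_iff.1 hr
    have term_le : ∀ m, n < m →
        ((m : ℝ≥0∞) ^ a)⁻¹ * mzvTail l m ≤ 2 ^ l.length * ((m : ℝ≥0∞) ^ 2)⁻¹ := by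
      intro m hm
      have hm1 : (1 : ℝ≥0∞) ≤ m := Nat.one_le_cast.2 (by omega)
      rcases hl with ⟨rfl, ha2⟩ | hl
      · simpa [mzvTail] using ENNReal.inv_le_inv.2 (pow_le_pow_right₀ hm1 ha2)
      · calc ((m : ℝ≥0∞) ^ a)⁻¹ * mzvTail l m ≤ (m : ℝ≥0∞)⁻¹ * (2 ^ l.length * (m : ℝ≥0∞)⁻¹) := by
              gcongr
              · simpa using pow_le_pow_right₀ hm1 ha
              · calc mzvTail l m ≤ 2 ^ l.length / (m + 1) := ih hl m
                  _ ≤ 2 ^ l.length / m := by gcongr; exact le_self_add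
                  _ = _ := div_eq_mul_inv ..
          _ = 2 ^ l.length * ((m : ℝ≥0∞) ^ 2)⁻¹ := by
              rw [sq, ENNReal.mul_inv (by simp) (by simp)]
              ring
    calc mzvTail (a :: l) n ≤ tailSum (fun m => 2 ^ l.length * ((m : ℝ≥0∞) ^ 2)⁻¹) n :=
          tailSum_mono term_le
      _ = 2 ^ l.length * tailSum (fun m => ((m : ℝ≥0∞) ^ 2)⁻¹) n := tailSum_const_mul ..
      _ ≤ 2 ^ l.length * (2 / (n + 1)) := by gcongr; exact tailSum_inv_sq_le n
      _ = 2 ^ (a :: l).length / (n + 1) := by rw [List.length_cons, pow_succ, mul_div_assoc]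

lemma mzvTail_ne_top {r : List ℕ} (hr : IsAdmissible r) (n : ℕ) : mzvTail r n ≠ ⊤ :=
  ne_top_of_le_ne_top (ENNReal.div_ne_top (by simp) (by simp)) (mzvTail_le hr n)

-- The three terms of `tailSum_mul_tailSum`, read off on index lists.
def stuffles : List ℕ → List ℕ → List (List ℕ)
  | [], s => [s]
  | a :: r, [] => [a :: r]
  | a :: r, b :: s =>
      (stuffles r (b :: s)).map (a :: ·) ++ (stuffles (a :: r) s).map (b :: ·) ++
        (stuffles r s).map ((a + b) :: ·)

lemma mzvTail_mul_mzvTail (r s : List ℕ) (n : ℕ) :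
    mzvTail r n * mzvTail s n = ((stuffles r s).map (mzvTail · n)).sum := by
  induction r, s using stuffles.induct generalizing n with
  | case1 s => simp [stuffles, mzvTail]
  | case2 a r => simp [stuffles, mzvTail]
  | case3 a r b s ih₁ ih₂ ih₃ =>
    have cons_sum : ∀ (c : ℕ) (l : List (List ℕ)),
        (l.map fun t => mzvTail (c :: t) n).sum =
          tailSum (fun m => ((m : ℝ≥0∞) ^ c)⁻¹ * (l.map (mzvTail · m)).sum) n := by
      intro c l
      simp only [mzvTail, tailSum_list_sum, ← List.sum_map_mul_left]
    rw [mzvTail, mzvTail, tailSum_mul_tailSum, stuffles]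
    simp only [List.map_append, List.sum_append, List.map_map, Function.comp_def, cons_sum,
      ← ih₁, ← ih₂, ← ih₃, ← tailSum_add]
    congr 1
    ext m
    rw [pow_add, ENNReal.mul_inv (by simp) (by simp)]
    simp only [mzvTail]
    ring

lemma eq_nil_of_nil_mem_stuffles {r s : List ℕ} (h : [] ∈ stuffles r s) : r = [] ∧ s = [] := by
  match r, s with
  | [], s => simpa [stuffles, eq_comm] using h
  | a :: r, [] => simp [stuffles] at h
  | a :: r, b :: s => simp [stuffles] at h

lemma eq_nil_or_isAdmissible_of_mem_stuffles {r s t : List ℕ} (ht : t ∈ stuffles r s)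
    (hr : r = [] ∨ IsAdmissible r) (hs : s = [] ∨ IsAdmissible s) : t = [] ∨ IsAdmissible t := by
  induction r, s using stuffles.induct generalizing t with
  | case1 s => simp_all [stuffles]
  | case2 a r => simp_all [stuffles]
  | case3 a r b s ih₁ ih₂ ih₃ =>
    obtain ⟨ha, hr'⟩ := isAdmissible_cons_iff.1 (hr.resolve_left (List.cons_ne_nil a r))
    obtain ⟨hb, hs'⟩ := isAdmissible_cons_iff.1 (hs.resolve_left (List.cons_ne_nil b s))
    replace hr' := hr'.imp_left And.left
    replace hs' := hs'.imp_left And.left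
    refine .inr ?_
    simp only [stuffles, List.mem_append, List.mem_map] at ht
    rcases ht with (⟨t, ht, rfl⟩ | ⟨t, ht, rfl⟩) | ⟨t, ht, rfl⟩
    · refine isAdmissible_cons_iff.2 ⟨ha, .inr ((ih₁ ht hr' hs).resolve_left fun h => ?_)⟩
      exact List.cons_ne_nil b s (eq_nil_of_nil_mem_stuffles (h ▸ ht)).2
    · refine isAdmissible_cons_iff.2 ⟨hb, .inr ((ih₂ ht hr hs').resolve_left fun h => ?_)⟩
      exact List.cons_ne_nil a r (eq_nil_of_nil_mem_stuffles (h ▸ ht)).1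
    · refine isAdmissible_cons_iff.2 ⟨by omega, ?_⟩
      rcases ih₃ ht hr' hs' with rfl | h
      · exact .inl ⟨rfl, by omega⟩
      · exact .inr h

lemma IsAdmissible.of_mem_stuffles {r s t : List ℕ} (hr : IsAdmissible r) (hs : IsAdmissible s)
    (ht : t ∈ stuffles r s) : IsAdmissible t :=
  (eq_nil_or_isAdmissible_of_mem_stuffles ht (.inr hr) (.inr hs)).resolve_left
    fun h => hr.1 (eq_nil_of_nil_mem_stuffles (h ▸ ht)).1

lemma mzv_mul {r s : List ℕ} (hr : IsAdmissible r) (hs : IsAdmissible s) :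
    mzv r * mzv s = ((stuffles r s).map mzv).sum := by
  have h := mzvTail_mul_mzvTail r s 0
  rw [mzv_eq_toReal_mzvTail, mzv_eq_toReal_mzvTail, ← ENNReal.toReal_mul, h,
    ENNReal.toReal_list_sum (h ▸ ENNReal.mul_ne_top (mzvTail_ne_top hr 0) (mzvTail_ne_top hs 0)),
    List.map_map]
  exact congrArg List.sum (List.map_congr_left fun t _ => (mzv_eq_toReal_mzvTail t).symm)

lemma mzv_singleton {a : ℕ} (ha : a ≠ 0) : mzv [a] = ∑' n : ℕ, ((n : ℝ) ^ a)⁻¹ := by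
  rw [mzv_eq_toReal_mzvTail, mzvTail, tailSum, ENNReal.tsum_toReal_eq]
  · refine tsum_congr fun m => ?_
    rcases Nat.eq_zero_or_pos m with rfl | hm
    · simp [ha]
    · simp [hm, mzvTail]
  · intro m
    split_ifs with hm
    · simp [mzvTail, hm.ne']
    · simp

lemma mzv_two : mzv [2] = Real.pi ^ 2 / 6 := by
  simpa [mzv_singleton] using hasSum_zeta_two.tsum_eq

lemma one_mem_Zspan : (1 : ℝ) ∈ Zspan := Submodule.subset_span (.inl rfl)

lemma mzv_mem_Zspan {r : List ℕ} (hr : IsAdmissible r) : mzv r ∈ Zspan :=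
  Submodule.subset_span (.inr ⟨r, hr.1, hr.2.1, hr.2.2, rfl⟩)

lemma mul_mem_Zspan {x y : ℝ} (hx : x ∈ Zspan) (hy : y ∈ Zspan) : x * y ∈ Zspan := by
  have generators : ∀ x ∈ MZVSet, ∀ y ∈ MZVSet, x * y ∈ Zspan := by
    rintro _ (rfl | ⟨r, hr₁, hr₂, hr₃, rfl⟩) y hy
    · rw [one_mul]
      exact Submodule.subset_span hy
    rcases hy with rfl | ⟨s, hs₁, hs₂, hs₃, rfl⟩
    · simpa using mzv_mem_Zspan ⟨hr₁, hr₂, hr₃⟩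
    rw [mzv_mul ⟨hr₁, hr₂, hr₃⟩ ⟨hs₁, hs₂, hs₃⟩]
    refine list_sum_mem fun _ hmem => ?_
    obtain ⟨t, ht, rfl⟩ := List.mem_map.1 hmem
    exact mzv_mem_Zspan (.of_mem_stuffles ⟨hr₁, hr₂, hr₃⟩ ⟨hs₁, hs₂, hs₃⟩ ht)
  have mul_le : Zspan * Zspan ≤ Zspan := by
    rw [Zspan, Submodule.span_mul_span, Submodule.span_le]
    rintro _ ⟨x, hx, y, hy, rfl⟩
    exact generators x hx y hy
  exact mul_le (Submodule.mul_mem_mul hx hy)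

noncomputable def Zsubalgebra : Subalgebra ℚ ℝ :=
  Zspan.toSubalgebra one_mem_Zspan fun _ _ => mul_mem_Zspan

lemma pi_sq_mem_Zspan : Real.pi ^ 2 ∈ Zspan := by
  have h : Real.pi ^ 2 = (6 : ℚ) • mzv [2] := by
    rw [mzv_two, Rat.smul_def]
    push_cast
    ring
  rw [h]
  exact Zspan.smul_mem 6 (mzv_mem_Zspan ⟨by simp, by simp, 2, rfl, le_rfl⟩)

/-- `Z` is a subring of `ℝ`; the `ℚ`-subalgebra of `ℂ` generated by `Z` and `iπ`
equals `Z + iπZ`; and this sum is direct: `Z ∩ iπZ = {0}`. -/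
theorem statement19 :
    (∃ S : Subring ℝ, (S : Set ℝ) = (Zspan : Set ℝ)) ∧
    ((Algebra.adjoin ℚ
        (((fun x : ℝ => (x : ℂ)) '' (Zspan : Set ℝ)) ∪ {Complex.I * (Real.pi : ℂ)}) :
        Subalgebra ℚ ℂ) : Set ℂ)
      = {z : ℂ | ∃ x ∈ Zspan, ∃ y ∈ Zspan, z = (x : ℂ) + Complex.I * (Real.pi : ℂ) * (y : ℂ)} ∧
    (∀ x ∈ Zspan, ∀ y ∈ Zspan,
      (x : ℂ) = Complex.I * (Real.pi : ℂ) * (y : ℂ) → x = 0) := by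
  set ZC := Zsubalgebra.map Complex.ofRealHom.toRatAlgHom
  have hZC : (ZC : Set ℂ) = (fun x : ℝ => (x : ℂ)) '' Zspan := Subalgebra.coe_map _ _
  have hsq : (Complex.I * Real.pi) ^ 2 ∈ ZC :=
    Subalgebra.mem_map.2 ⟨-Real.pi ^ 2, Zspan.neg_mem pi_sq_mem_Zspan, by simp [mul_pow]⟩
  refine ⟨⟨Zsubalgebra.toSubring, rfl⟩, ?_, fun x _ y _ h => by simpa using congrArg Complex.re h⟩
  rw [← hZC, Algebra.coe_adjoin_union_singleton_of_sq_mem ZC hsq]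
  simp [ZC, Zsubalgebra]
end
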